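/- arXiv:math/0005199 — 2 statements merged into one kernel-verified Lean document; each statement's English description precedes it below -/
import Mathlib

section
/- Let $m \ge n \ge 1$ and let $(h_0,\ldots,h_n)$ be integers with $h_0=1$. Define $\chi_p$ by $\sum_{p=0}^m \chi_p t^p = (1-t)^{m-n}\sum_{i=0}^n h_i t^i$. If $\chi_p = (-1)^{m-n}\chi_{m-p}$ for all $p$, then $h_i = h_{n-i}$ for all $i$. -/
/-!
Reflecting coefficients, `reflect N p = t^N p(1/t)`, turns the duality `χ_p = (-1)^{m-n} χ_{m-p}`
into `reflect m P = (-1)^{m-n} P` for `P = ∑ χ_p t^p`. Since `reflect` is multiplicative and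
`reflect (m-n) ((1-t)^{m-n}) = (t-1)^{m-n} = (-1)^{m-n} (1-t)^{m-n}`, cancelling the nonzero factor
`(-1)^{m-n} (1-t)^{m-n}` in the domain `ℤ[t]` leaves `reflect n H = H` for `H = ∑ h_i t^i`.
-/

open Finset Polynomial

namespace Polynomial

section Semiring

variable {R : Type*} [Semiring R]

theorem coeff_sum_range_C_mul_X_pow (a : ℕ → R) (n k : ℕ) :
    (∑ i ∈ range (n + 1), C (a i) * X ^ i).coeff k = if k ≤ n then a k else 0 := by
  simp [coeff_C_mul, coeff_X_pow]

theorem natDegree_sum_range_C_mul_X_pow_le (a : ℕ → R) (n : ℕ) :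
    (∑ i ∈ range (n + 1), C (a i) * X ^ i).natDegree ≤ n :=
  natDegree_sum_le_of_forall_le _ _ fun _ hi =>
    (natDegree_C_mul_X_pow_le _ _).trans (Nat.lt_succ_iff.mp (mem_range.mp hi))

theorem reflect_sum_range_C_mul_X_pow (a : ℕ → R) (n : ℕ) :
    reflect n (∑ i ∈ range (n + 1), C (a i) * X ^ i)
      = ∑ i ∈ range (n + 1), C (a (n - i)) * X ^ i := by
  ext k
  rw [coeff_reflect, coeff_sum_range_C_mul_X_pow, coeff_sum_range_C_mul_X_pow]
  rcases le_or_gt k n with hk | hk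
  · rw [revAt_le hk, if_pos (Nat.sub_le n k), if_pos hk]
  · rw [revAt_eq_self_of_lt hk, if_neg hk.not_ge, if_neg hk.not_ge]

theorem reflect_pow {f : R[X]} {d : ℕ} (hf : f.natDegree ≤ d) (k : ℕ) :
    reflect (k * d) (f ^ k) = reflect d f ^ k := by
  induction k with
  | zero => simp
  | succ k ih =>
    rw [pow_succ, pow_succ, add_one_mul, reflect_mul _ _ (natDegree_pow_le_of_le k hf) hf, ih]

end Semiring

section Ring

variable {R : Type*} [Ring R]

theorem natDegree_one_sub_X_le : (1 - X : R[X]).natDegree ≤ 1 :=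
  (natDegree_sub_le _ _).trans (max_le (by simp) natDegree_X_le)

theorem reflect_one_sub_X_pow (k : ℕ) : reflect k ((1 - X : R[X]) ^ k) = (X - 1) ^ k :=
  calc reflect k ((1 - X : R[X]) ^ k) = reflect 1 (1 - X) ^ k := by
        simpa only [mul_one] using reflect_pow natDegree_one_sub_X_le k
    _ = (X - 1) ^ k := by rw [reflect_sub, reflect_one, reflect_one_X, pow_one]

end Ring

theorem reflect_eq_self_of_reflect_one_sub_X_pow_mul {R : Type*} [CommRing R] [IsDomain R]
    {A : R[X]} {n : ℕ} (hA : A.natDegree ≤ n) (k : ℕ)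
    (h : reflect (k + n) ((1 - X) ^ k * A) = (-1) ^ k * ((1 - X) ^ k * A)) :
    reflect n A = A := by
  have hdeg : ((1 - X : R[X]) ^ k).natDegree ≤ k :=
    (natDegree_pow_le_of_le k natDegree_one_sub_X_le).trans_eq (mul_one k)
  have hsign : (X - 1 : R[X]) ^ k = (-1) ^ k * (1 - X) ^ k := by
    rw [← mul_pow, neg_one_mul, neg_sub]
  have hne : ((-1) ^ k * (1 - X) ^ k : R[X]) ≠ 0 := by
    rw [← hsign]
    exact pow_ne_zero k (X_sub_C_ne_zero 1)
  rw [reflect_mul _ _ hdeg hA, reflect_one_sub_X_pow, hsign, ← mul_assoc] at h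
  exact mul_left_cancel₀ hne h

end Polynomial

theorem stmt_12_general (m n : ℕ) (hnm : n ≤ m) (h χ : ℕ → ℤ)
    (hχ : ∑ p ∈ Finset.range (m + 1), C (χ p) * X ^ p
        = (1 - X) ^ (m - n) * ∑ i ∈ Finset.range (n + 1), C (h i) * X ^ i)
    (hdual : ∀ p, p ≤ m → χ p = (-1 : ℤ) ^ (m - n) * χ (m - p)) :
    ∀ i, i ≤ n → h i = h (n - i) := by
  have hχ_refl : reflect m (∑ p ∈ range (m + 1), C (χ p) * X ^ p)
      = (-1) ^ (m - n) * ∑ p ∈ range (m + 1), C (χ p) * X ^ p := by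
    rw [reflect_sum_range_C_mul_X_pow, mul_sum]
    refine sum_congr rfl fun p hp => ?_
    rw [hdual (m - p) (Nat.sub_le m p), Nat.sub_sub_self (Nat.lt_succ_iff.mp (mem_range.mp hp)),
      C_mul, C_pow, C_neg, C_1, mul_assoc]
  have hh_refl := reflect_eq_self_of_reflect_one_sub_X_pow_mul
    (natDegree_sum_range_C_mul_X_pow_le h n) (m - n) (by rwa [← hχ, Nat.sub_add_cancel hnm])
  intro i hi
  have := congrArg (coeff · i) hh_refl
  simp only [reflect_sum_range_C_mul_X_pow, coeff_sum_range_C_mul_X_pow, if_pos hi] at this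
  exact this.symm

/-- If `∑_p χ_p t^p = (1-t)^{m-n} ∑_i h_i t^i` with `h_0 = 1` and
`χ_p = (-1)^{m-n} χ_{m-p}` for all `p`, then `h_i = h_{n-i}` for all `i`. -/
theorem stmt_12 (m n : ℕ) (hn : 1 ≤ n) (hnm : n ≤ m) (h χ : ℕ → ℤ) (h0 : h 0 = 1)
    (hχ : ∑ p ∈ Finset.range (m + 1), C (χ p) * X ^ p
        = (1 - X) ^ (m - n) * ∑ i ∈ Finset.range (n + 1), C (h i) * X ^ i)
    (hdual : ∀ p, p ≤ m → χ p = (-1 : ℤ) ^ (m - n) * χ (m - p)) :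
    ∀ i, i ≤ n → h i = h (n - i) :=
  stmt_12_general m n hnm h χ hχ hdual
end

section
/- Let $m > n \ge 1$, let $(f_{-1},f_0,\ldots,f_{n-1})$ with $f_{-1}=1$ determine $(h_0,\ldots,h_n)$, and set $\chi(K)=\sum_{s\ge 0}(-1)^{s-1}f_{s-1}+1$ (so $\chi(K)-1 = -\sum_s (-1)^s f_{s-1}$). Define $\chi_r(\mathcal{W}_K) = \sum_{i+j+l+p \le m,\ l\ge 1,\ i+p=r} (-1)^{j-p} f_{i+j+l-1}\binom{i+j+l}{i}\binom{j+l}{l}\binom{m-i-j-l}{p}$. Then $\sum_{r=0}^m \chi_r(\mathcal{W}_K)\, t^{2r} = (1-t^2)^{m-n}(h_0 + h_1t^2 + \cdots + h_nt^{2n}) + (\chi(K)-1)(1-t^2)^m$. -/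
/-!
Group the cells by `s = i + j + l`. For fixed `s ≤ m` the sum over `p` is the binomial expansion
of `(1 - t) ^ (m - s)`. Since `C(i+j+l, i) * C(j+l, l)` is the trinomial coefficient
`C(s; i, j, l)`, the sum over `i + j + l = s`, `l ≥ 1`, of `C(s; i, j, l) t^i (-1)^j` is
`(t + (-1) + 1)^s` minus its `l = 0` part `(t - 1)^s`. Hence
`∑ r, χ_r t^r = ∑ s, f_s (t^s - (t - 1)^s) (1 - t)^(m - s)`, which splits as
`(1 - t)^(m - n) ∑ s, f_s t^s (1 - t)^(n - s) - (∑ s, (-1)^s f_s) (1 - t)^m`.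
Reflecting the defining relation of the `h_k` (`P ↦ X^n P(1/X)`) identifies the first sum with
`∑ k, h_k t^k`; finally `t = X²`.
-/

open Finset Polynomial

namespace Polynomial

section Semiring

variable {R : Type*} [Semiring R]

theorem reflect_sum {ι : Type*} (N : ℕ) (s : Finset ι) (g : ι → R[X]) :
    reflect N (∑ i ∈ s, g i) = ∑ i ∈ s, reflect N (g i) :=
  map_sum ({ toFun := reflect N, map_zero' := reflect_zero, map_add' := (reflect_add · · N) } :
    R[X] →+ R[X]) g s

theorem reflect_pow_of_natDegree_le {p : R[X]} {d : ℕ} (hp : p.natDegree ≤ d) (k : ℕ) :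
    reflect (d * k) (p ^ k) = reflect d p ^ k := by
  induction k with
  | zero => simp [reflect_one]
  | succ k ih =>
    rw [mul_add_one, pow_succ, pow_succ,
      reflect_mul _ _ ((natDegree_pow_le_of_le k hp).trans_eq (mul_comm k d)) hp, ih]

end Semiring

section CommRing

variable {R : Type*} [CommRing R]

theorem reflect_X_sub_one_pow (k : ℕ) : reflect k ((X - 1 : R[X]) ^ k) = (1 - X) ^ k := by
  have h := reflect_pow_of_natDegree_le (natDegree_X_sub_C_le (1 : R)) k
  rwa [one_mul, map_one, reflect_sub, reflect_one_X, reflect_one, pow_one] at h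

theorem reflect_C_mul_X_sub_one_pow {i n : ℕ} (hi : i ≤ n) (a : R) :
    reflect n (C a * (X - 1) ^ (n - i)) = C a * X ^ i * (1 - X) ^ (n - i) := by
  have h := reflect_mul ((X - 1 : R[X]) ^ (n - i)) 1
    (natDegree_pow_le_of_le _ (natDegree_X_sub_C_le 1)) (by simp : (1 : R[X]).natDegree ≤ i)
  rw [mul_one, mul_one, Nat.sub_add_cancel hi, reflect_X_sub_one_pow, reflect_one] at h
  rw [reflect_C_mul, h]
  ring

end CommRing

end Polynomial

theorem sum_range_ite_eq_and_mul_pow {R : Type*} [Semiring R] {e N : ℕ} {Q : Prop}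
    [Decidable Q] (hQ : Q → e ≤ N) (a x : R) :
    ∑ r ∈ range (N + 1), (if e = r ∧ Q then a else 0) * x ^ r = if Q then a * x ^ e else 0 := by
  by_cases hq : Q
  · simp [hq, Nat.lt_succ_iff.mpr (hQ hq)]
  · simp [hq]

theorem sum_range_sum_Icc_ite_add_eq {M : Type*} [AddCommMonoid M] {c N : ℕ} (hc : c ≤ N)
    (g : ℕ → M) :
    ∑ j ∈ range (N + 1), ∑ l ∈ Icc 1 N, (if j + l = c then g j else 0) = ∑ j ∈ range c, g j := by
  have hinner : ∀ j, ∑ l ∈ Icc 1 N, (if j + l = c then g j else 0) = if j < c then g j else 0 := by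
    intro j
    split_ifs with hj
    · rw [sum_eq_single_of_mem (c - j) (mem_Icc.mpr ⟨by omega, by omega⟩)
        fun l _ hl => if_neg (by omega), if_pos (by omega)]
    · exact sum_eq_zero fun l hl => if_neg (by simp at hl; omega)
  simp only [hinner]
  rw [← sum_filter]
  congr 1
  ext j
  simp only [mem_filter, mem_range]
  omega

theorem sum_sum_sum_ite_add_le_eq_sum_range {M : Type*} [NonUnitalNonAssocSemiring M]
    (A B C : Finset ℕ) (m : ℕ) (u : ℕ → M) (v : ℕ → ℕ → ℕ → M) :
    ∑ i ∈ A, ∑ j ∈ B, ∑ l ∈ C, (if i + j + l ≤ m then u (i + j + l) * v i j l else 0)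
      = ∑ s ∈ range (m + 1), u s * ∑ i ∈ A, ∑ j ∈ B, ∑ l ∈ C,
          (if i + j + l = s then v i j l else 0) := by
  simp only [mul_sum, mul_ite, mul_zero]
  symm
  rw [sum_comm]; refine sum_congr rfl fun i _ => ?_
  rw [sum_comm]; refine sum_congr rfl fun j _ => ?_
  rw [sum_comm]; refine sum_congr rfl fun l _ => ?_
  simp only [sum_ite_eq, mem_range, Nat.lt_succ_iff]

section Binomial

variable {R : Type*} [CommRing R]

theorem sum_range_neg_one_pow_mul_choose_mul_pow {d N : ℕ} (hd : d ≤ N) (x : R) :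
    ∑ p ∈ range (N + 1), (-1) ^ p * (d.choose p : R) * x ^ p = (1 - x) ^ d := by
  rw [sub_eq_neg_add, add_pow]
  refine (sum_subset (range_subset_range.mpr (Nat.succ_le_succ hd)) fun p _ hp => ?_).symm.trans
    (sum_congr rfl fun p _ => ?_)
  · rw [Nat.choose_eq_zero_of_lt (by simpa using hp)]
    simp
  · rw [neg_pow, one_pow]
    ring

theorem sum_range_neg_one_pow_mul_choose (d : ℕ) :
    ∑ j ∈ range d, (-1) ^ j * (d.choose j : R) = 0 ^ d - (-1) ^ d := by
  have h := add_pow (-1 : R) 1 d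
  rw [neg_add_cancel, sum_range_succ, Nat.choose_self] at h
  simp only [one_pow, mul_one, Nat.cast_one] at h
  rw [h]
  ring

theorem sum_trinomial_eq_pow_sub_sub_one_pow {s N : ℕ} (hs : s ≤ N) (x : R) :
    ∑ i ∈ range (N + 1), ∑ j ∈ range (N + 1), ∑ l ∈ Icc 1 N,
      (if i + j + l = s then
        (-1) ^ j * ((i + j + l).choose i : R) * ((j + l).choose l : R) * x ^ i else 0)
      = x ^ s - (x - 1) ^ s := by
  have hinner : ∀ i, ∑ j ∈ range (N + 1), ∑ l ∈ Icc 1 N,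
      (if i + j + l = s then
        (-1) ^ j * ((i + j + l).choose i : R) * ((j + l).choose l : R) * x ^ i else 0)
      = x ^ i * (0 : R) ^ (s - i) * s.choose i - x ^ i * (-1) ^ (s - i) * s.choose i := by
    intro i
    by_cases hi : i ≤ s
    · have hterm : ∀ j l, (if i + j + l = s then
          (-1) ^ j * ((i + j + l).choose i : R) * ((j + l).choose l : R) * x ^ i else 0)
          = if j + l = s - i then (s.choose i : R) * x ^ i * ((-1) ^ j * (s - i).choose j)
            else 0 := by
        intro j l
        by_cases hjl : j + l = s - i
        · rw [if_pos (by omega), if_pos hjl, ← Nat.choose_symm_add, hjl,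
            show i + j + l = s by omega]
          ring
        · rw [if_neg (by omega), if_neg hjl]
      simp only [hterm]
      rw [sum_range_sum_Icc_ite_add_eq (by omega), ← mul_sum, sum_range_neg_one_pow_mul_choose]
      ring
    · rw [Nat.choose_eq_zero_of_lt (by omega)]
      simp only [Nat.cast_zero, mul_zero, sub_zero]
      exact sum_eq_zero fun j _ => sum_eq_zero fun l _ => if_neg (by omega)
  have hpow : ∀ y : R, (x + y) ^ s = ∑ i ∈ range (N + 1), x ^ i * y ^ (s - i) * s.choose i := by
    intro y
    rw [add_pow]
    exact sum_subset (range_subset_range.mpr (Nat.succ_le_succ hs)) fun i _ hi => by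
      rw [Nat.choose_eq_zero_of_lt (by simpa using hi), Nat.cast_zero, mul_zero]
  simp only [hinner]
  rw [sum_sub_distrib, ← hpow, ← hpow, add_zero, ← sub_eq_add_neg]

theorem one_sub_pow_mul_pow_sub_sub_one_pow {s n m : ℕ} (hsn : s ≤ n) (hnm : n ≤ m) (x : R) :
    (1 - x) ^ (m - s) * (x ^ s - (x - 1) ^ s)
      = (1 - x) ^ (m - n) * (x ^ s * (1 - x) ^ (n - s)) - (-1) ^ s * (1 - x) ^ m := by
  obtain ⟨a, rfl⟩ := Nat.exists_eq_add_of_le hsn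
  obtain ⟨b, rfl⟩ := Nat.exists_eq_add_of_le hnm
  rw [show x - 1 = -(1 - x) by ring, neg_pow, show s + a + b - s = a + b by omega,
    show s + a + b - (s + a) = b by omega, show s + a - s = a by omega]
  ring

end Binomial

def signedCellCount (m : ℕ) (f : ℕ → ℤ) (i j l p : ℕ) : ℤ :=
  (-1 : ℤ) ^ (j + p) * f (i + j + l) * ((i + j + l).choose i) * ((j + l).choose l) *
    ((m - i - j - l).choose p)

/-- `bigradedEulerChar m f r` is `χ_r(𝒲_K)`, where `f s` stands for the paper's `f_{s-1}`. -/
def bigradedEulerChar (m : ℕ) (f : ℕ → ℤ) (r : ℕ) : ℤ :=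
  ∑ i ∈ range (m + 1), ∑ j ∈ range (m + 1), ∑ l ∈ Icc 1 m, ∑ p ∈ range (m + 1),
    if i + p = r ∧ i + j + l + p ≤ m then signedCellCount m f i j l p else 0

section EulerChar

variable {R : Type*} [CommRing R]

theorem sum_bigradedEulerChar_mul_pow_eq_sum_cells (m : ℕ) (f : ℕ → ℤ) (x : R) :
    ∑ r ∈ range (m + 1), (bigradedEulerChar m f r : R) * x ^ r
      = ∑ i ∈ range (m + 1), ∑ j ∈ range (m + 1), ∑ l ∈ Icc 1 m, ∑ p ∈ range (m + 1),
          if i + j + l + p ≤ m then (signedCellCount m f i j l p : R) * x ^ (i + p) else 0 := by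
  simp only [bigradedEulerChar, Int.cast_sum, sum_mul]
  rw [sum_comm]; refine sum_congr rfl fun i _ => ?_
  rw [sum_comm]; refine sum_congr rfl fun j _ => ?_
  rw [sum_comm]; refine sum_congr rfl fun l _ => ?_
  rw [sum_comm]; refine sum_congr rfl fun p _ => ?_
  simp only [Int.cast_ite, Int.cast_zero]
  refine sum_range_ite_eq_and_mul_pow (fun hQ => ?_) _ x
  omega

theorem sum_range_signedCellCount_mul_pow (m i j l : ℕ) (f : ℕ → ℤ) (x : R) :
    ∑ p ∈ range (m + 1),
        (if i + j + l + p ≤ m then (signedCellCount m f i j l p : R) * x ^ (i + p) else 0)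
      = if i + j + l ≤ m then
          (f (i + j + l) : R) * (1 - x) ^ (m - (i + j + l)) *
            ((-1) ^ j * ((i + j + l).choose i : R) * ((j + l).choose l : R) * x ^ i)
        else 0 := by
  split_ifs with hs
  · have hterm : ∀ p, (if i + j + l + p ≤ m then (signedCellCount m f i j l p : R) * x ^ (i + p)
          else 0) = (f (i + j + l) : R) *
            ((-1) ^ j * ((i + j + l).choose i : R) * ((j + l).choose l : R) * x ^ i) *
            ((-1) ^ p * ((m - (i + j + l)).choose p : R) * x ^ p) := by
      intro p
      split_ifs with hp
      · rw [signedCellCount, show m - i - j - l = m - (i + j + l) by omega]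
        push_cast
        ring
      · rw [Nat.choose_eq_zero_of_lt (n := m - (i + j + l)) (by omega)]
        simp
    simp only [hterm]
    rw [← mul_sum, sum_range_neg_one_pow_mul_choose_mul_pow (by omega)]
    ring
  · exact sum_eq_zero fun p _ => if_neg (by omega)

theorem sum_bigradedEulerChar_mul_pow {m n : ℕ} (hnm : n ≤ m) {f : ℕ → ℤ}
    (hf : ∀ s, n < s → f s = 0) (x : R) :
    ∑ r ∈ range (m + 1), (bigradedEulerChar m f r : R) * x ^ r
      = (1 - x) ^ (m - n) * ∑ s ∈ range (n + 1), (f s : R) * x ^ s * (1 - x) ^ (n - s)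
        + ((-(∑ s ∈ range (n + 1), (-1) ^ s * f s) : ℤ) : R) * (1 - x) ^ m := by
  calc _ = ∑ i ∈ range (m + 1), ∑ j ∈ range (m + 1), ∑ l ∈ Icc 1 m,
          if i + j + l ≤ m then
            (f (i + j + l) : R) * (1 - x) ^ (m - (i + j + l)) *
              ((-1) ^ j * ((i + j + l).choose i : R) * ((j + l).choose l : R) * x ^ i)
          else 0 := by
        simp only [sum_bigradedEulerChar_mul_pow_eq_sum_cells, sum_range_signedCellCount_mul_pow]
    _ = ∑ s ∈ range (m + 1), (f s : R) * ((1 - x) ^ (m - s) * (x ^ s - (x - 1) ^ s)) := by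
        rw [sum_sum_sum_ite_add_le_eq_sum_range _ _ _ m (fun s => (f s : R) * (1 - x) ^ (m - s))]
        exact sum_congr rfl fun s hs => by
          rw [sum_trinomial_eq_pow_sub_sub_one_pow (Nat.lt_succ_iff.mp (mem_range.mp hs)),
            mul_assoc]
    _ = ∑ s ∈ range (n + 1), (f s : R) * ((1 - x) ^ (m - s) * (x ^ s - (x - 1) ^ s)) :=
        (sum_subset (range_subset_range.mpr (Nat.succ_le_succ hnm)) fun s _ hs => by
          rw [hf s (by simpa using hs), Int.cast_zero, zero_mul]).symm
    _ = _ := by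
        rw [sum_congr rfl fun s hs => by
          rw [one_sub_pow_mul_pow_sub_sub_one_pow (Nat.lt_succ_iff.mp (mem_range.mp hs)) hnm]]
        push_cast
        rw [mul_sum, neg_mul, sum_mul, ← sum_neg_distrib, ← sum_add_distrib]
        exact sum_congr rfl fun s _ => by ring

end EulerChar

theorem sum_intCast_mul_pow_eq_sum_mul_one_sub_pow {R : Type*} [CommRing R] {n : ℕ}
    {f h : ℕ → ℤ}
    (hh : ∑ k ∈ range (n + 1), C (h k) * X ^ (n - k)
        = ∑ i ∈ range (n + 1), C (f i) * (X - 1) ^ (n - i)) (x : R) :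
    ∑ k ∈ range (n + 1), (h k : R) * x ^ k
      = ∑ i ∈ range (n + 1), (f i : R) * x ^ i * (1 - x) ^ (n - i) := by
  have hrefl := congrArg (reflect n) hh
  simp only [reflect_sum] at hrefl
  rw [sum_congr rfl fun k hk => by
      rw [reflect_C_mul_X_pow, revAt_le (Nat.sub_le n k),
        Nat.sub_sub_self (Nat.lt_succ_iff.mp (mem_range.mp hk))],
    sum_congr rfl fun i hi =>
      reflect_C_mul_X_sub_one_pow (Nat.lt_succ_iff.mp (mem_range.mp hi)) _] at hrefl
  simpa using congrArg (aeval x) hrefl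

theorem stmt_16_general (m n : ℕ) (hmn : n < m) (f h : ℕ → ℤ)
    (hfz : ∀ s, n < s → f s = 0)
    (hh : ∑ k ∈ Finset.range (n + 1), C (h k) * X ^ (n - k)
        = ∑ i ∈ Finset.range (n + 1), C (f i) * (X - 1) ^ (n - i)) :
    ∑ r ∈ Finset.range (m + 1),
      C (∑ i ∈ Finset.range (m + 1), ∑ j ∈ Finset.range (m + 1),
         ∑ l ∈ Finset.Icc 1 m, ∑ p ∈ Finset.range (m + 1),
           if i + p = r ∧ i + j + l + p ≤ m then
             (-1 : ℤ) ^ (j + p) * f (i + j + l) * ((i + j + l).choose i) *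
               ((j + l).choose l) * ((m - i - j - l).choose p)
           else 0) * X ^ (2 * r)
    = (1 - X ^ 2) ^ (m - n) * (∑ i ∈ Finset.range (n + 1), C (h i) * X ^ (2 * i))
      + C (-(∑ s ∈ Finset.range (n + 1), (-1 : ℤ) ^ s * f s)) * (1 - X ^ 2) ^ m := by
  have key := sum_bigradedEulerChar_mul_pow hmn.le hfz (X ^ 2 : ℤ[X])
  rw [← sum_intCast_mul_pow_eq_sum_mul_one_sub_pow hh] at key
  simp only [eq_intCast C, pow_mul]
  exact key

/-- Theorem 5.4: the generating polynomial of the bigraded Euler characteristics of `W_K` is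
`∑_r χ_r(W_K) t^{2r} = (1-t²)^{m-n}(h_0 + ⋯ + h_n t^{2n}) + (χ(K)-1)(1-t²)^m`, where
`χ_r(W_K) = ∑_{i+p=r, l ≥ 1, i+j+l+p ≤ m} (-1)^{j-p} f_{i+j+l-1} binom(i+j+l,i) binom(j+l,l)
binom(m-i-j-l, p)` and `χ(K) - 1 = -∑_s (-1)^s f_{s-1}`. Here `f s` denotes `f_{s-1}`
(so `f 0 = 1`, `f s = 0` for `s > n`), and `(-1)^{j-p} = (-1)^{j+p}`. -/
theorem stmt_16 (m n : ℕ) (hn : 1 ≤ n) (hmn : n < m) (f h : ℕ → ℤ)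
    (hf0 : f 0 = 1) (hfz : ∀ s, n < s → f s = 0)
    (hh : ∑ k ∈ Finset.range (n + 1), C (h k) * X ^ (n - k)
        = ∑ i ∈ Finset.range (n + 1), C (f i) * (X - 1) ^ (n - i)) :
    ∑ r ∈ Finset.range (m + 1),
      C (∑ i ∈ Finset.range (m + 1), ∑ j ∈ Finset.range (m + 1),
         ∑ l ∈ Finset.Icc 1 m, ∑ p ∈ Finset.range (m + 1),
           if i + p = r ∧ i + j + l + p ≤ m then
             (-1 : ℤ) ^ (j + p) * f (i + j + l) * ((i + j + l).choose i) *
               ((j + l).choose l) * ((m - i - j - l).choose p)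
           else 0) * X ^ (2 * r)
    = (1 - X ^ 2) ^ (m - n) * (∑ i ∈ Finset.range (n + 1), C (h i) * X ^ (2 * i))
      + C (-(∑ s ∈ Finset.range (n + 1), (-1 : ℤ) ^ s * f s)) * (1 - X ^ 2) ^ m :=
  stmt_16_general m n hmn f h hfz hh
end
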